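/- arXiv:2605.28072 — 3 statements merged into one kernel-verified Lean document; each statement's English description precedes it below -/
import Mathlib

section
/- Let C ⊆ F_{q^m}^n be almost affine with dimension k = log_{q^m}|C|, Z ≤ F_q^n, and x ∈ C. Then the subcode C(Z,x) = {c ∈ C : π_Z(c) = π_Z(x)} has cardinality exactly q^{m(k − ρ_C(Z))}. In particular, this cardinality is independent of the choice of x ∈ C. -/
set_option linter.unusedSectionVars false
set_option linter.unusedVariables false


open Submodule Module

variable (K L : Type) [Field K] [Fintype K] [Field L] [Fintype L] [Algebra K L]

/-- Orthogonal complement w.r.t. the standard dot product on `ι → K`. -/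
def stdPerp {ι : Type} [Fintype ι] (V : Submodule K (ι → K)) : Submodule K (ι → K) where
  carrier := {w | ∀ v ∈ V, ∑ j, v j * w j = 0}
  zero_mem' := by intro v hv; simp
  add_mem' := by
    intro a b ha hb v hv
    simp [Pi.add_apply, mul_add, Finset.sum_add_distrib, ha v hv, hb v hv]
  smul_mem' := by
    intro c a ha v hv
    simp only [Pi.smul_apply, smul_eq_mul, mul_left_comm]
    rw [← Finset.mul_sum, ha v hv, mul_zero]

/-- Extension of scalars: the `L`-span of a `K`-subspace of `ι → K` inside `ι → L`. -/
def extScalars {ι : Type} (W : Submodule K (ι → K)) : Submodule L (ι → L) :=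
  Submodule.span L ((fun (w : ι → K) (j : ι) => algebraMap K L (w j)) '' (W : Set (ι → K)))

/-- Image of the code `C` under the canonical projection `π_V`. -/
def projImage {ι : Type} [Fintype ι] (C : Set (ι → L)) (V : Submodule K (ι → K)) :
    Set ((ι → L) ⧸ extScalars K L (stdPerp K V)) :=
  Submodule.Quotient.mk '' C

/-- The rank function induced by a code: `ρ_C(V) = log_{q^m} |π_V(C)|`. -/
noncomputable def rho {ι : Type} [Fintype ι] (C : Set (ι → L)) (V : Submodule K (ι → K)) : ℕ :=
  Nat.log (Fintype.card L) (Nat.card (projImage K L C V))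

/-- `C` is an almost affine rank-metric code. -/
def AlmostAffine {ι : Type} [Fintype ι] (C : Set (ι → L)) : Prop :=
  ∀ V : Submodule K (ι → K), ∃ e : ℕ, Nat.card (projImage K L C V) = (Fintype.card L) ^ e

/-- Support of a vector `v ∈ L^ι` w.r.t. a `K`-basis `B` of `L`. -/
def supp {ι : Type} {m : ℕ} (B : Basis (Fin m) K L) (v : ι → L) : Submodule K (ι → K) :=
  Submodule.span K (Set.range fun i : Fin m => fun j : ι => B.repr (v j) i)

/-- The subcode `C(Z,x) = {c ∈ C : π_Z(c) = π_Z(x)}`. -/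
def subcode {ι : Type} [Fintype ι] (C : Set (ι → L)) (Z : Submodule K (ι → K)) (x : ι → L) :
    Set (ι → L) :=
  {c ∈ C | (Submodule.Quotient.mk (p := extScalars K L (stdPerp K Z)) c) =
      Submodule.Quotient.mk x}

/-- The `q`-matroid rank axioms (R1)–(R3). -/
def IsQMatroidRank {E : Type} [AddCommGroup E] [Module K E] (r : Submodule K E → ℕ) : Prop :=
  (∀ V : Submodule K E, r V ≤ finrank K V) ∧
  (∀ V W : Submodule K E, V ≤ W → r V ≤ r W) ∧
  (∀ V W : Submodule K E, r (V ⊔ W) + r (V ⊓ W) ≤ r V + r W)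

section MyAux
variable {K L}

private lemma aux_fiber_const {α β : Type} [DecidableEq β] (q : ℕ) (hq : 1 < q)
    (s : Finset α) (f : α → β) (a b : ℕ)
    (hs : s.card = q ^ a) (hi : (s.image f).card = q ^ b)
    (hfib : ∀ y, (s.filter fun x => f x = y).card ≤ q) :
    ∀ y ∈ s.image f, (s.filter fun x => f x = y).card = q ^ (a - b) := by
  have hsum : s.card = ∑ y ∈ s.image f, (s.filter fun x => f x = y).card :=
    Finset.card_eq_sum_card_fiberwise (fun x hx => Finset.mem_image_of_mem f hx)
  have hpos : ∀ y ∈ s.image f, 1 ≤ (s.filter fun x => f x = y).card := by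
    intro y hy
    obtain ⟨x, hx, rfl⟩ := Finset.mem_image.mp hy
    exact Finset.card_pos.mpr ⟨x, Finset.mem_filter.mpr ⟨hx, rfl⟩⟩
  have hba : b ≤ a := by
    have h1 : (s.image f).card ≤ s.card := Finset.card_image_le
    rw [hs, hi] at h1
    exact (Nat.pow_le_pow_iff_right hq).mp h1
  have hab : a ≤ b + 1 := by
    have h2 : s.card ≤ ∑ _y ∈ s.image f, q := by
      rw [hsum]; exact Finset.sum_le_sum fun y _ => hfib y
    rw [Finset.sum_const, smul_eq_mul, hi, hs, ← pow_succ] at h2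
    exact (Nat.pow_le_pow_iff_right hq).mp h2
  rcases Nat.eq_or_lt_of_le hba with rfl | hlt
  · have he : ∑ y ∈ s.image f, 1 = ∑ y ∈ s.image f, (s.filter fun x => f x = y).card := by
      rw [← hsum, Finset.sum_const, smul_eq_mul, mul_one, hi, hs]
    have hone := (Finset.sum_eq_sum_iff_of_le hpos).mp he
    intro y hy; rw [← hone y hy]; simp
  · have hab2 : a = b + 1 := le_antisymm hab hlt
    subst hab2
    have he : ∑ y ∈ s.image f, (s.filter fun x => f x = y).card = ∑ _y ∈ s.image f, q := by
      rw [← hsum, Finset.sum_const, smul_eq_mul, hi, hs, pow_succ]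
    have hone := (Finset.sum_eq_sum_iff_of_le (fun y _ => hfib y)).mp he
    intro y hy; rw [hone y hy]; simp

private lemma natCard_set_eq_toFinset_card {α : Type} (t : Set α) [Fintype t] :
    Nat.card t = t.toFinset.card := by
  rw [Nat.card_coe_set_eq, Set.ncard_eq_toFinset_card']

private lemma aux_fiber_const_set {α β : Type} [Finite α] [Finite β] (q : ℕ) (hq : 1 < q)
    (s : Set α) (f : α → β) (a b : ℕ)
    (hs : Nat.card s = q ^ a) (hi : Nat.card (f '' s) = q ^ b)
    (hfib : ∀ y, Nat.card {x ∈ s | f x = y} ≤ q) :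
    ∀ y ∈ f '' s, Nat.card {x ∈ s | f x = y} = q ^ (a - b) := by
  classical
  have := Fintype.ofFinite α
  have := Fintype.ofFinite β
  have hfil : ∀ y, {x ∈ s | f x = y}.toFinset = s.toFinset.filter (fun x => f x = y) := by
    intro y; ext z; simp
  intro y hy
  rw [natCard_set_eq_toFinset_card, hfil]
  refine aux_fiber_const q hq s.toFinset f a b ?_ ?_ ?_ y ?_
  · rw [← natCard_set_eq_toFinset_card, hs]
  · rw [← Set.toFinset_image, ← natCard_set_eq_toFinset_card, hi]
  · intro y'; rw [← hfil, ← natCard_set_eq_toFinset_card]; exact hfib y'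
  · rw [← Set.toFinset_image, Set.mem_toFinset]; exact hy

private lemma natCard_eq_image_mul {α β : Type} [Finite α] [Finite β]
    (s : Set α) (f : α → β) (m : ℕ)
    (h : ∀ y ∈ f '' s, Nat.card {x ∈ s | f x = y} = m) :
    Nat.card s = Nat.card (f '' s) * m := by
  classical
  have := Fintype.ofFinite α
  have := Fintype.ofFinite β
  rw [natCard_set_eq_toFinset_card, natCard_set_eq_toFinset_card, Set.toFinset_image]
  have e1 : ∀ y ∈ s.toFinset.image f, (s.toFinset.filter fun x => f x = y).card = m := by
    intro y hy
    have hy' : y ∈ f '' s := by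
      rw [Finset.mem_image] at hy
      obtain ⟨z, hz, rfl⟩ := hy
      exact ⟨z, Set.mem_toFinset.mp hz, rfl⟩
    have h2 := h y hy'
    rw [natCard_set_eq_toFinset_card] at h2
    rw [← h2]; congr 1; ext z; simp
  calc s.toFinset.card
      = ∑ y ∈ s.toFinset.image f, (s.toFinset.filter fun x => f x = y).card :=
        Finset.card_eq_sum_card_fiberwise (fun x hx => Finset.mem_image_of_mem f hx)
    _ = ∑ _y ∈ s.toFinset.image f, m := Finset.sum_congr rfl e1
    _ = (s.toFinset.image f).card * m := by rw [Finset.sum_const, smul_eq_mul]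

private lemma stdPerp_antitone {ι : Type} [Fintype ι] {Z Z' : Submodule K (ι → K)} (h : Z ≤ Z') :
    stdPerp K Z' ≤ stdPerp K Z := fun w hw v hv => hw v (h hv)

private lemma dot_smul {ι : Type} [Fintype ι] (v u : ι → K) (c : K) :
    ∑ j, v j * (c • u) j = c * ∑ j, v j * u j := by
  simp only [Pi.smul_apply, smul_eq_mul, Finset.mul_sum]
  exact Finset.sum_congr rfl fun j _ => by ring

private lemma dot_sub {ι : Type} [Fintype ι] (v w u : ι → K) :
    ∑ j, v j * (w - u) j = ∑ j, v j * w j - ∑ j, v j * u j := by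
  simp [Pi.sub_apply, mul_sub, Finset.sum_sub_distrib]

private lemma mem_stdPerp_sup_span {ι : Type} [Fintype ι] (Z : Submodule K (ι → K)) (v w : ι → K) :
    w ∈ stdPerp K (Z ⊔ span K {v}) ↔ w ∈ stdPerp K Z ∧ ∑ j, v j * w j = 0 := by
  constructor
  · intro h
    exact ⟨stdPerp_antitone le_sup_left h, h v (mem_sup_right (mem_span_singleton_self v))⟩
  · rintro ⟨h1, h2⟩
    show ∀ z ∈ Z ⊔ span K {v}, ∑ j, z j * w j = 0
    intro z hz
    rw [mem_sup] at hz
    obtain ⟨z₁, hz₁, s, hs, rfl⟩ := hz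
    rw [mem_span_singleton] at hs
    obtain ⟨c, rfl⟩ := hs
    have he : ∑ j, (z₁ + c • v) j * w j = ∑ j, z₁ j * w j + c * ∑ j, v j * w j := by
      simp only [Pi.add_apply, Pi.smul_apply, smul_eq_mul, Finset.mul_sum,
        ← Finset.sum_add_distrib]
      exact Finset.sum_congr rfl fun j _ => by ring
    rw [he, h1 z₁ hz₁, h2, mul_zero, add_zero]

private lemma stdPerp_decomp {ι : Type} [Fintype ι] (Z : Submodule K (ι → K)) (v : ι → K) :
    ∃ u ∈ stdPerp K Z, stdPerp K Z = stdPerp K (Z ⊔ span K {v}) ⊔ span K {u} := by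
  by_cases h : ∀ w ∈ stdPerp K Z, ∑ j, v j * w j = 0
  · refine ⟨0, zero_mem _, le_antisymm ?_ ?_⟩
    · intro w hw
      exact mem_sup_left ((mem_stdPerp_sup_span Z v w).mpr ⟨hw, h w hw⟩)
    · refine sup_le (stdPerp_antitone le_sup_left) ?_
      rw [Submodule.span_zero_singleton]
      exact bot_le
  · push_neg at h
    obtain ⟨u₀, hu₀, ht⟩ := h
    set t := ∑ j, v j * u₀ j with htdef
    refine ⟨t⁻¹ • u₀, smul_mem _ _ hu₀, le_antisymm ?_ ?_⟩
    · intro w hw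
      set c := ∑ j, v j * w j with hcdef
      have hBu : ∑ j, v j * (t⁻¹ • u₀) j = 1 := by
        rw [dot_smul, ← htdef, inv_mul_cancel₀ ht]
      have hw1 : w - c • (t⁻¹ • u₀) ∈ stdPerp K (Z ⊔ span K {v}) := by
        rw [mem_stdPerp_sup_span]
        refine ⟨sub_mem hw (smul_mem _ _ (smul_mem _ _ hu₀)), ?_⟩
        rw [dot_sub, dot_smul, hBu, mul_one, ← hcdef, sub_self]
      have hwe : w = (w - c • (t⁻¹ • u₀)) + c • (t⁻¹ • u₀) := by ring_nf
      rw [hwe]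
      exact add_mem (mem_sup_left hw1)
        (mem_sup_right (smul_mem _ _ (mem_span_singleton_self _)))
    · exact sup_le (stdPerp_antitone le_sup_left)
        ((span_singleton_le_iff_mem _ _).mpr (smul_mem _ _ hu₀))

private lemma extScalars_mono {ι : Type} {W W' : Submodule K (ι → K)} (h : W ≤ W') :
    extScalars K L W ≤ extScalars K L W' :=
  span_mono (Set.image_mono h)

private lemma extScalars_sup {ι : Type} (W W' : Submodule K (ι → K)) :
    extScalars K L (W ⊔ W') = extScalars K L W ⊔ extScalars K L W' := by
  refine le_antisymm ?_ (sup_le (extScalars_mono le_sup_left) (extScalars_mono le_sup_right))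
  rw [extScalars, span_le]
  rintro _ ⟨w, hw, rfl⟩
  rw [SetLike.mem_coe] at hw
  rw [SetLike.mem_coe, mem_sup]
  rw [mem_sup] at hw
  obtain ⟨w₁, h1, w₂, h2, rfl⟩ := hw
  refine ⟨_, subset_span ⟨w₁, h1, rfl⟩, _, subset_span ⟨w₂, h2, rfl⟩, ?_⟩
  funext j
  simp [map_add]

private lemma extScalars_span_singleton {ι : Type} (u : ι → K) :
    extScalars K L (span K {u}) = span L {fun j => algebraMap K L (u j)} := by
  refine le_antisymm ?_ ?_
  · rw [extScalars, span_le]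
    rintro _ ⟨w, hw, rfl⟩
    rw [SetLike.mem_coe] at hw
    rw [SetLike.mem_coe, mem_span_singleton]
    rw [mem_span_singleton] at hw
    obtain ⟨c, rfl⟩ := hw
    exact ⟨algebraMap K L c, by funext j; simp⟩
  · rw [span_le, Set.singleton_subset_iff]
    exact subset_span ⟨u, mem_span_singleton_self u, rfl⟩

private lemma stdPerp_top {ι : Type} [Fintype ι] :
    stdPerp K (⊤ : Submodule K (ι → K)) = ⊥ := by
  classical
  rw [eq_bot_iff]
  intro w hw
  rw [Submodule.mem_bot]
  funext j
  have h1 := hw (Pi.single j 1) Submodule.mem_top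
  simpa [Pi.single_apply] using h1

private lemma extScalars_bot {ι : Type} :
    extScalars K L (⊥ : Submodule K (ι → K)) = ⊥ := by
  have h0 : (⊥ : Submodule K (ι → K)) = span K {0} := (Submodule.span_zero_singleton K).symm
  rw [h0, extScalars_span_singleton,
    show (fun j : ι => algebraMap K L ((0 : ι → K) j)) = (0 : ι → L) from
      funext fun j => map_zero _,
    Submodule.span_zero_singleton]

private lemma natCard_span_singleton_le {M : Type} [AddCommGroup M] [Module L M] (w : M) :
    Nat.card (span L {w}) ≤ Fintype.card L := by
  have hsurj : Function.Surjective
      (fun c : L => (⟨c • w, smul_mem _ c (mem_span_singleton_self w)⟩ : span L {w})) := by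
    rintro ⟨y, hy⟩
    obtain ⟨c, hc⟩ := mem_span_singleton.mp hy
    exact ⟨c, Subtype.ext hc⟩
  simpa [Nat.card_eq_fintype_card] using Nat.card_le_card_of_surjective _ hsurj

private lemma natCard_fiber_le_ker {M N : Type} [AddCommGroup M] [Module L M]
    [AddCommGroup N] [Module L N] [Finite M] (p : M →ₗ[L] N) (y : N) :
    Nat.card {z : M | p z = y} ≤ Nat.card (LinearMap.ker p) := by
  rcases Set.eq_empty_or_nonempty {z : M | p z = y} with he | ⟨z₀, hz₀⟩
  · simp [he]
  · have hz₀' : p z₀ = y := hz₀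
    have hinj : Function.Injective
        (fun z : {z : M | p z = y} =>
          (⟨z.1 - z₀, by
            have hz : p z.1 = y := z.2
            rw [LinearMap.mem_ker, map_sub, hz, hz₀', sub_self]⟩ : LinearMap.ker p)) := by
      intro a b hab
      apply Subtype.ext
      have h1 : a.1 - z₀ = b.1 - z₀ := congrArg Subtype.val hab
      exact sub_left_inj.mp h1
    exact Nat.card_le_card_of_injective _ hinj

end MyAux

section MyMain
variable {K L}

private lemma key_induction {n : ℕ} (C : Set (Fin n → L)) (hC : AlmostAffine K L C) :
    ∀ (d : ℕ) (Z : Submodule K (Fin n → K)), n ≤ finrank K Z + d →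
      ∀ x ∈ C, Nat.card (subcode K L C Z x) =
        Fintype.card L ^ (rho K L C ⊤ - rho K L C Z) := by
  have hq : 1 < Fintype.card L := Fintype.one_lt_card
  have hcardproj : ∀ Z : Submodule K (Fin n → K),
      Nat.card (projImage K L C Z) = Fintype.card L ^ rho K L C Z := by
    intro Z; obtain ⟨e, he⟩ := hC Z; rw [rho, he, Nat.log_pow hq]
  have hEtop : extScalars K L (stdPerp K (⊤ : Submodule K (Fin n → K))) = ⊥ := by
    rw [stdPerp_top, extScalars_bot]
  have hmkinj : Function.Injective
      (Submodule.Quotient.mk (p := extScalars K L (stdPerp K (⊤ : Submodule K (Fin n → K))))) := by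
    intro a b hab
    rw [Submodule.Quotient.eq, hEtop, Submodule.mem_bot, sub_eq_zero] at hab
    exact hab
  have htop : ∀ x ∈ C, Nat.card (subcode K L C (⊤ : Submodule K (Fin n → K)) x) =
      Fintype.card L ^ (rho K L C ⊤ - rho K L C ⊤) := by
    intro x hx
    have hsub : subcode K L C (⊤ : Submodule K (Fin n → K)) x = {x} := by
      ext c
      simp only [subcode, Set.mem_setOf_eq, Set.mem_singleton_iff]
      constructor
      · rintro ⟨hc, hcx⟩; exact hmkinj hcx
      · rintro rfl; exact ⟨hx, rfl⟩
    rw [hsub, Nat.sub_self, pow_zero, Nat.card_coe_set_eq, Set.ncard_singleton]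
  intro d
  induction d with
  | zero =>
    intro Z hZ x hx
    have hZtop : Z = ⊤ := by
      apply Submodule.eq_top_of_finrank_eq
      have h1 : finrank K Z ≤ finrank K (Fin n → K) := Z.finrank_le
      rw [Module.finrank_fin_fun] at h1 ⊢
      omega
    subst hZtop
    exact htop x hx
  | succ d IH =>
    intro Z hZ x hx
    by_cases hZtop : Z = ⊤
    · subst hZtop; exact htop x hx
    · obtain ⟨v, hv⟩ : ∃ v, v ∉ Z := by
        by_contra h
        push_neg at h
        exact hZtop (eq_top_iff.mpr fun z _ => h z)
      set Z' := Z ⊔ span K {v} with hZ'def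
      have hvZ' : v ∈ Z' := mem_sup_right (mem_span_singleton_self v)
      have hZlt : Z < Z' := lt_of_le_of_ne le_sup_left (fun h => hv (by rw [h]; exact hvZ'))
      have hfr : finrank K Z < finrank K Z' := Submodule.finrank_lt_finrank_of_lt hZlt
      have hZ'd : n ≤ finrank K Z' + d := by omega
      set E := extScalars K L (stdPerp K Z) with hEdef
      set E' := extScalars K L (stdPerp K Z') with hE'def
      have hEE' : E' ≤ E := extScalars_mono (stdPerp_antitone le_sup_left)
      set p : ((Fin n → L) ⧸ E') →ₗ[L] ((Fin n → L) ⧸ E) :=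
        Submodule.mapQ E' E LinearMap.id (by rwa [Submodule.comap_id]) with hpdef
      have hpmk : ∀ c : Fin n → L,
          p (Submodule.Quotient.mk c) = Submodule.Quotient.mk c := by
        intro c
        rw [hpdef, Submodule.mapQ_apply, LinearMap.id_apply]
      have himg : p '' (projImage K L C Z') = projImage K L C Z := by
        rw [projImage, projImage, Set.image_image]
        exact Set.image_congr fun c _ => hpmk c
      obtain ⟨u, huZ, hdecomp⟩ := stdPerp_decomp Z v
      have hEdecomp : E = E' ⊔ span L {fun j => algebraMap K L (u j)} := by
        rw [hEdef, hdecomp, extScalars_sup, extScalars_span_singleton, hE'def, hZ'def]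
      have hker : LinearMap.ker p = E.map E'.mkQ := by
        ext y
        obtain ⟨w, rfl⟩ := E'.mkQ_surjective y
        rw [Submodule.mkQ_apply, LinearMap.mem_ker, hpmk, Submodule.Quotient.mk_eq_zero]
        constructor
        · intro hw
          exact ⟨w, hw, by rw [Submodule.mkQ_apply]⟩
        · rintro ⟨e, he, hew⟩
          rw [Submodule.mkQ_apply, Submodule.Quotient.eq] at hew
          have hwe : w = -(e - w) + e := by ring_nf
          rw [hwe]
          exact add_mem (neg_mem (hEE' hew)) he
      have hkerle : Nat.card (LinearMap.ker p) ≤ Fintype.card L := by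
        have h0 : E'.map E'.mkQ = ⊥ := by
          rw [eq_bot_iff]
          rintro y ⟨e, he, rfl⟩
          rw [Submodule.mem_bot, Submodule.mkQ_apply, Submodule.Quotient.mk_eq_zero]
          exact he
        rw [hker, hEdecomp, Submodule.map_sup, Submodule.map_span, Set.image_singleton, h0,
          bot_sup_eq]
        exact natCard_span_singleton_le _
      have hfib : ∀ y, Nat.card {z ∈ projImage K L C Z' | p z = y} ≤ Fintype.card L := by
        intro y
        refine le_trans (le_trans ?_ (natCard_fiber_le_ker p y)) hkerle
        rw [Nat.card_coe_set_eq, Nat.card_coe_set_eq]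
        exact Set.ncard_le_ncard (fun z hz => hz.2) (Set.toFinite _)
      have hconst := aux_fiber_const_set (Fintype.card L) hq (projImage K L C Z') p
        (rho K L C Z') (rho K L C Z) (hcardproj Z') (by rw [himg]; exact hcardproj Z) hfib
      have hsplit : Nat.card (subcode K L C Z x) =
          Nat.card ((Submodule.Quotient.mk (p := E')) '' (subcode K L C Z x)) *
            Fintype.card L ^ (rho K L C ⊤ - rho K L C Z') := by
        apply natCard_eq_image_mul
        intro y hy
        obtain ⟨c', hc', rfl⟩ := hy
        have hc'C : c' ∈ C := hc'.1
        have hsetEq : {a ∈ subcode K L C Z x |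
            Submodule.Quotient.mk (p := E') a = Submodule.Quotient.mk c'} =
            subcode K L C Z' c' := by
          ext c
          simp only [subcode, Set.mem_setOf_eq]
          constructor
          · rintro ⟨⟨hcC, _⟩, h2⟩; exact ⟨hcC, h2⟩
          · rintro ⟨hcC, h2⟩
            refine ⟨⟨hcC, ?_⟩, h2⟩
            have h3 := congrArg p h2
            rw [hpmk, hpmk] at h3
            rw [show (Submodule.Quotient.mk (p := E) c) = Submodule.Quotient.mk c' from h3]
            exact hc'.2
        rw [hsetEq]
        exact IH Z' hZ'd c' hc'C
      have himgfiber : (Submodule.Quotient.mk (p := E')) '' (subcode K L C Z x) =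
          {z ∈ projImage K L C Z' | p z = Submodule.Quotient.mk (p := E) x} := by
        ext y
        constructor
        · rintro ⟨c, ⟨hcC, hcx⟩, rfl⟩
          exact ⟨⟨c, hcC, rfl⟩, by rw [hpmk]; exact hcx⟩
        · rintro ⟨⟨c, hcC, rfl⟩, hpy⟩
          rw [hpmk] at hpy
          exact ⟨c, ⟨hcC, hpy⟩, rfl⟩
      have hxmem : Submodule.Quotient.mk (p := E) x ∈ p '' (projImage K L C Z') := by
        rw [himg]; exact ⟨x, hx, rfl⟩
      have hfibval := hconst _ hxmem
      rw [hsplit, himgfiber, hfibval, ← pow_add]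
      congr 1
      have h1 : rho K L C Z ≤ rho K L C Z' := by
        have hle : Nat.card (projImage K L C Z) ≤ Nat.card (projImage K L C Z') := by
          rw [← himg, Nat.card_coe_set_eq, Nat.card_coe_set_eq]
          exact Set.ncard_image_le (Set.toFinite _)
        rw [hcardproj, hcardproj] at hle
        exact (Nat.pow_le_pow_iff_right hq).mp hle
      have h2 : rho K L C Z' ≤ rho K L C ⊤ := by
        have hc1 : Nat.card (projImage K L C Z') ≤ Nat.card C := by
          rw [projImage, Nat.card_coe_set_eq, Nat.card_coe_set_eq]
          exact Set.ncard_image_le (Set.toFinite _)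
        have hc2 : Nat.card (projImage K L C (⊤ : Submodule K (Fin n → K))) = Nat.card C := by
          rw [projImage, Nat.card_coe_set_eq, Nat.card_coe_set_eq]
          exact Set.ncard_image_of_injective _ hmkinj
        rw [hcardproj, ← hc2, hcardproj] at hc1
        exact (Nat.pow_le_pow_iff_right hq).mp hc1
      omega

end MyMain

/-- `|C(Z,x)| = q^{m(k − ρ_C(Z))}` where `k = log_{q^m} |C|`;
in particular this cardinality does not depend on `x ∈ C`. -/
theorem stmt_11 {K L : Type} [Field K] [Fintype K] [Field L] [Fintype L] [Algebra K L]
    {n : ℕ} (C : Set (Fin n → L)) (hC : AlmostAffine K L C)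
    (Z : Submodule K (Fin n → K)) (x : Fin n → L) (hx : x ∈ C) :
    Nat.card (subcode K L C Z x) =
      Fintype.card L ^ (Nat.log (Fintype.card L) (Nat.card C) - rho K L C Z) := by
  have hEtop : extScalars K L (stdPerp K (⊤ : Submodule K (Fin n → K))) = ⊥ := by
    rw [stdPerp_top, extScalars_bot]
  have hmkinj : Function.Injective
      (Submodule.Quotient.mk (p := extScalars K L (stdPerp K (⊤ : Submodule K (Fin n → K))))) := by
    intro a b hab
    rw [Submodule.Quotient.eq, hEtop, Submodule.mem_bot, sub_eq_zero] at hab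
    exact hab
  have hlog : Nat.log (Fintype.card L) (Nat.card C) = rho K L C ⊤ := by
    have hc2 : Nat.card (projImage K L C (⊤ : Submodule K (Fin n → K))) = Nat.card C := by
      rw [projImage, Nat.card_coe_set_eq, Nat.card_coe_set_eq]
      exact Set.ncard_image_of_injective _ hmkinj
    rw [rho, hc2]
  rw [hlog]
  exact key_induction C hC n Z (Nat.le_add_left n (finrank K Z)) x hx
end

section
/- Let C ⊆ F_{q^m}^n be almost affine, Z ≤ F_q^n, x ∈ C. Then the subcode C(Z,x) = {c ∈ C : π_Z(c) = π_Z(x)} is itself almost affine, and for every W ≤ F_q^n its projection satisfies |π_W(C(Z,x))| = q^{m(ρ_C(Z+W) − ρ_C(Z))}. -/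
/-!
If `C` is almost affine then, for `V₁ ≤ V₂`, all fibers of `π_{V₂}(C) → π_{V₁}(C)` have the same
size. For `V₂ = V₁ + ⟨v⟩` this holds because every fiber has between `1` and `|L|` elements while
the total grows by a factor that is a power of `|L|`; in general it follows by adjoining
generators one at a time. The subcode `C(Z,x)` is essentially the fiber over `π_Z(x)`: its
projections to `W` and to `Z + W` have the same size because its words already agree modulo `Z`.
-/

open Submodule Module

variable (K L : Type) [Field K] [Fintype K] [Field L] [Fintype L] [Algebra K L]

section Counting

variable {α β γ : Type*}

theorem card_image_le_card_image_of_eq_imp [Finite α] {A : Set α} {f : α → β} {g : α → γ}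
    (h : ∀ a ∈ A, ∀ b ∈ A, f a = f b → g a = g b) : Nat.card (g '' A) ≤ Nat.card (f '' A) := by
  rcases A.eq_empty_or_nonempty with rfl | ⟨a₀, -⟩
  · simp
  have : Nonempty α := ⟨a₀⟩
  have hg : g '' A = (g ∘ Function.invFunOn f A) '' (f '' A) := by
    rw [← Set.image_comp]
    refine Set.image_congr fun a ha => ?_
    exact (h _ (Function.invFunOn_mem ⟨a, ha, rfl⟩) a ha
      (Function.invFunOn_eq ⟨a, ha, rfl⟩)).symm
  rw [hg]
  exact Nat.card_image_le (Set.toFinite _)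

theorem card_image_eq_sum_card_image_fiber [Finite α] (p : α → β) (g : β → γ) (A : Set α) :
    Nat.card (p '' A) = ∑ y ∈ (Set.toFinite ((g ∘ p) '' A)).toFinset,
      Nat.card (p '' {a ∈ A | g (p a) = y}) := by
  classical
  rw [Nat.card_coe_set_eq, Set.ncard_eq_toFinset_card _ (Set.toFinite _),
    Finset.card_eq_sum_card_fiberwise (f := g) (t := (Set.toFinite ((g ∘ p) '' A)).toFinset)
      fun y hy => by
        obtain ⟨a, ha, rfl⟩ := (Set.Finite.mem_toFinset _).1 hy
        rw [Finset.mem_coe, Set.Finite.mem_toFinset]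
        exact ⟨a, ha, rfl⟩]
  refine Finset.sum_congr rfl fun y _ => ?_
  rw [Nat.card_coe_set_eq, Set.ncard_eq_toFinset_card _ (Set.toFinite _)]
  congr 1
  ext z
  simp only [Finset.mem_filter, Set.Finite.mem_toFinset, Set.mem_image, Set.mem_ofPred_eq]
  constructor
  · rintro ⟨⟨a, ha, rfl⟩, rfl⟩
    exact ⟨a, ⟨ha, rfl⟩, rfl⟩
  · rintro ⟨a, ⟨ha, rfl⟩, rfl⟩
    exact ⟨⟨a, ha, rfl⟩, rfl⟩

theorem Finset.mul_pow_eq_pow_of_sum_eq_pow {ι : Type*} {s : Finset ι} {f : ι → ℕ}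
    {ℓ e₁ e₂ : ℕ} (hℓ : 1 < ℓ) (hf : ∀ i ∈ s, 1 ≤ f i ∧ f i ≤ ℓ) (hs : s.card = ℓ ^ e₁)
    (hsum : ∑ i ∈ s, f i = ℓ ^ e₂) : ∀ i ∈ s, f i * ℓ ^ e₁ = ℓ ^ e₂ := by
  have hlow : ∑ _i ∈ s, 1 ≤ ∑ i ∈ s, f i := Finset.sum_le_sum fun i hi => (hf i hi).1
  have hup : ∑ i ∈ s, f i ≤ ∑ _i ∈ s, ℓ := Finset.sum_le_sum fun i hi => (hf i hi).2
  simp only [Finset.sum_const, smul_eq_mul, mul_one, hs, hsum] at hlow hup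
  have h₁ : e₁ ≤ e₂ := (Nat.pow_le_pow_iff_right hℓ).1 hlow
  have h₂ : e₂ ≤ e₁ + 1 := (Nat.pow_le_pow_iff_right hℓ).1 (by rwa [pow_succ])
  intro i hi
  rcases Nat.le_add_one_iff.1 h₂ with h₂ | rfl
  · obtain rfl : e₂ = e₁ := le_antisymm h₂ h₁
    have := (Finset.sum_eq_sum_iff_of_le fun i hi => (hf i hi).1).1
      (by simp [hs, hsum]) i hi
    rw [← this, one_mul]
  · have := (Finset.sum_eq_sum_iff_of_le fun i hi => (hf i hi).2).1
      (by simp [hs, hsum, pow_succ]) i hi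
    rw [this, pow_succ, mul_comm]

theorem eq_pow_sub_of_mul_pow_eq_pow {N ℓ a b : ℕ} (hℓ : 1 < ℓ) (h : N * ℓ ^ a = ℓ ^ b) :
    N = ℓ ^ (b - a) := by
  have hN : 0 < N := Nat.pos_of_ne_zero fun h0 => by
    rw [h0, zero_mul] at h
    exact (pow_pos (zero_lt_one.trans hℓ) b).ne' h.symm
  have hab : a ≤ b := (Nat.pow_le_pow_iff_right hℓ).1 (h ▸ Nat.le_mul_of_pos_left _ hN)
  refine Nat.eq_of_mul_eq_mul_right (pow_pos (zero_lt_one.trans hℓ) a) ?_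
  rw [h, ← pow_add, Nat.sub_add_cancel hab]

end Counting

section ExtScalars

variable {K L : Type} [Field K] [Field L] [Algebra K L] {ι : Type} [Fintype ι]

theorem mem_extScalars_stdPerp [FiniteDimensional K L] {V : Submodule K (ι → K)} {w : ι → L} :
    w ∈ extScalars K L (stdPerp K V) ↔ V ≤ LinearMap.ker (Fintype.linearCombination K w) := by
  simp only [SetLike.le_def, LinearMap.mem_ker, Fintype.linearCombination_apply]
  constructor
  · intro hw
    induction hw using Submodule.span_induction with
    | mem u hu =>
      obtain ⟨u, hu, rfl⟩ := hu
      intro v hv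
      simp only [Algebra.smul_def, ← map_mul, ← map_sum, hu v hv, map_zero]
    | zero => simp
    | add a b _ _ ha hb =>
      intro v hv
      simp only [Pi.add_apply, smul_add, Finset.sum_add_distrib, ha hv, hb hv, add_zero]
    | smul c a _ ha =>
      intro v hv
      simp only [Pi.smul_apply, smul_comm (v _) c, ← Finset.smul_sum, ha hv, smul_zero]
  · intro h
    let B := Module.finBasis K L
    have hcoord : ∀ t, (fun j => B.repr (w j) t) ∈ stdPerp K V := fun t v hv => by
      simpa [map_sum] using congrArg (fun l => B.repr l t) (h hv)
    have hw : w = ∑ t, B t • fun j => algebraMap K L (B.repr (w j) t) := by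
      funext j
      conv_lhs => rw [← B.sum_repr (w j)]
      simp [Finset.sum_apply, Algebra.smul_def, mul_comm]
    rw [hw]
    exact Submodule.sum_mem _ fun t _ =>
      Submodule.smul_mem _ _ (Submodule.subset_span ⟨_, hcoord t, rfl⟩)

theorem extScalars_stdPerp_antitone {V V' : Submodule K (ι → K)} (h : V ≤ V') :
    extScalars K L (stdPerp K V') ≤ extScalars K L (stdPerp K V) :=
  Submodule.span_mono (Set.image_mono fun _ hw v hv => hw v (h hv))

theorem extScalars_stdPerp_sup [FiniteDimensional K L] (V V' : Submodule K (ι → K)) :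
    extScalars K L (stdPerp K (V ⊔ V')) =
      extScalars K L (stdPerp K V) ⊓ extScalars K L (stdPerp K V') := by
  ext w
  simp only [Submodule.mem_inf, mem_extScalars_stdPerp, sup_le_iff]

theorem mem_extScalars_stdPerp_span_singleton [FiniteDimensional K L] {v : ι → K} {w : ι → L} :
    w ∈ extScalars K L (stdPerp K (K ∙ v)) ↔ ∑ j, v j • w j = 0 := by
  rw [mem_extScalars_stdPerp, Submodule.span_singleton_le_iff_mem, LinearMap.mem_ker,
    Fintype.linearCombination_apply]

theorem subcode_subcode_of_le {C : Set (ι → L)} {V₁ V₂ : Submodule K (ι → K)} (h : V₁ ≤ V₂)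
    {x d : ι → L} (hd : d ∈ subcode K L C V₁ x) :
    subcode K L (subcode K L C V₁ x) V₂ d = subcode K L C V₂ d := by
  ext c
  simp only [subcode, Set.mem_ofPred_eq]
  refine ⟨fun hc => ⟨hc.1.1, hc.2⟩, fun hc => ⟨⟨hc.1, ?_⟩, hc.2⟩⟩
  rw [← hd.2, Submodule.Quotient.eq]
  exact extScalars_stdPerp_antitone h ((Submodule.Quotient.eq _).1 hc.2)

end ExtScalars

section Projections

variable {K L : Type} [Field K] [Field L] [Fintype L] [Algebra K L] {ι : Type} [Fintype ι]

instance finite_projImage (A : Set (ι → L)) (V : Submodule K (ι → K)) :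
    Finite (projImage K L A V) :=
  Finite.Set.finite_image _ _

theorem card_projImage_pos {A : Set (ι → L)} {x : ι → L} (hx : x ∈ A)
    {V : Submodule K (ι → K)} : 0 < Nat.card (projImage K L A V) :=
  Nat.card_pos_iff.2 ⟨⟨_, x, hx, rfl⟩, inferInstance⟩

theorem rho_eq_of_card_eq {C : Set (ι → L)} {V : Submodule K (ι → K)} {e : ℕ}
    (h : Nat.card (projImage K L C V) = Fintype.card L ^ e) : rho K L C V = e := by
  rw [rho, h, Nat.log_pow Fintype.one_lt_card]

theorem card_projImage_eq_sum (A : Set (ι → L)) {V₁ V₂ : Submodule K (ι → K)} (h : V₁ ≤ V₂) :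
    Nat.card (projImage K L A V₂) = ∑ y ∈ (Set.toFinite (projImage K L A V₁)).toFinset,
      Nat.card (projImage K L {c ∈ A | Submodule.Quotient.mk c = y} V₂) :=
  card_image_eq_sum_card_image_fiber _ (Submodule.factor (extScalars_stdPerp_antitone h)) A

theorem card_projImage_subcode_sup (C : Set (ι → L)) (Z Y : Submodule K (ι → K)) (x : ι → L) :
    Nat.card (projImage K L (subcode K L C Z x) (Z ⊔ Y)) =
      Nat.card (projImage K L (subcode K L C Z x) Y) := by
  have hZ : ∀ a ∈ subcode K L C Z x, ∀ b ∈ subcode K L C Z x,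
      a - b ∈ extScalars K L (stdPerp K Z) := fun a ha b hb =>
    (Submodule.Quotient.eq _).1 (ha.2.trans hb.2.symm)
  refine le_antisymm (card_image_le_card_image_of_eq_imp fun a ha b hb hab => ?_)
    (card_image_le_card_image_of_eq_imp fun a ha b hb hab => ?_)
  · rw [Submodule.Quotient.eq, extScalars_stdPerp_sup]
    exact ⟨hZ a ha b hb, (Submodule.Quotient.eq _).1 hab⟩
  · rw [Submodule.Quotient.eq] at hab ⊢
    exact extScalars_stdPerp_antitone le_sup_right hab

/-- Within a fiber of `π_V`, the projection `π_{V + ⟨v⟩}` is determined by the coordinate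
`∑ j, v j • c j ∈ L`. -/
theorem card_projImage_subcode_sup_span_singleton_le (C : Set (ι → L))
    (V : Submodule K (ι → K)) (x : ι → L) (v : ι → K) :
    Nat.card (projImage K L (subcode K L C V x) (V ⊔ K ∙ v)) ≤ Fintype.card L := by
  calc Nat.card (projImage K L (subcode K L C V x) (V ⊔ K ∙ v))
      ≤ Nat.card ((fun c : ι → L => ∑ j, v j • c j) '' subcode K L C V x) := by
        refine card_image_le_card_image_of_eq_imp fun a ha b hb hab => ?_
        rw [Submodule.Quotient.eq, extScalars_stdPerp_sup, Submodule.mem_inf,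
          mem_extScalars_stdPerp_span_singleton, ← Submodule.Quotient.eq, ha.2, hb.2]
        simp [smul_sub, Finset.sum_sub_distrib, hab]
    _ ≤ Fintype.card L := by
        rw [← Nat.card_eq_fintype_card]
        exact Nat.card_mono Set.finite_univ (Set.subset_univ _) |>.trans_eq (by simp)

end Projections

section UniformFibers

variable {K L : Type} [Field K] [Field L] [Fintype L] [Algebra K L] {ι : Type} [Fintype ι]

/-- The fiber of `π_{V₂}(C) → π_{V₁}(C)` over `π_{V₁}(x)` is `π_{V₂}(C(V₁, x))`. -/
def UniformFibers (C : Set (ι → L)) (V₁ V₂ : Submodule K (ι → K)) : Prop :=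
  ∀ x ∈ C, Nat.card (projImage K L (subcode K L C V₁ x) V₂) * Nat.card (projImage K L C V₁) =
    Nat.card (projImage K L C V₂)

theorem UniformFibers.trans {C : Set (ι → L)} {V₁ V₂ V₃ : Submodule K (ι → K)}
    (h₁₂ : V₁ ≤ V₂) (h₂₃ : V₂ ≤ V₃) (hu₁₂ : UniformFibers C V₁ V₂)
    (hu₂₃ : UniformFibers C V₂ V₃) : UniformFibers C V₁ V₃ := by
  intro x hx
  set D := subcode K L C V₁ x
  have hsplit : Nat.card (projImage K L D V₃) * Nat.card (projImage K L C V₂) =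
      Nat.card (projImage K L D V₂) * Nat.card (projImage K L C V₃) := by
    rw [card_projImage_eq_sum D h₂₃, Finset.sum_mul, Finset.sum_const_nat, Nat.card_coe_set_eq,
      Set.ncard_eq_toFinset_card _ (Set.toFinite _)]
    intro y hy
    obtain ⟨d, hd, rfl⟩ := (Set.Finite.mem_toFinset _).1 hy
    have hfiber := hu₂₃ d hd.1
    rwa [← subcode_subcode_of_le h₁₂ hd] at hfiber
  refine Nat.eq_of_mul_eq_mul_right (card_projImage_pos (V := V₂) hx) ?_
  calc Nat.card (projImage K L D V₃) * Nat.card (projImage K L C V₁) *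
        Nat.card (projImage K L C V₂)
      = Nat.card (projImage K L D V₂) * Nat.card (projImage K L C V₁) *
          Nat.card (projImage K L C V₃) := by rw [mul_right_comm, hsplit, mul_right_comm]
    _ = Nat.card (projImage K L C V₃) * Nat.card (projImage K L C V₂) := by
        rw [hu₁₂ x hx, mul_comm]

theorem uniformFibers_sup_span_singleton {C : Set (ι → L)} (hC : AlmostAffine K L C)
    (V : Submodule K (ι → K)) (v : ι → K) : UniformFibers C V (V ⊔ K ∙ v) := by
  intro x hx
  obtain ⟨e₁, he₁⟩ := hC V
  obtain ⟨e₂, he₂⟩ := hC (V ⊔ K ∙ v)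
  rw [he₁, he₂]
  rw [card_projImage_eq_sum C le_sup_left] at he₂
  rw [Nat.card_coe_set_eq, Set.ncard_eq_toFinset_card _ (Set.toFinite _)] at he₁
  refine Finset.mul_pow_eq_pow_of_sum_eq_pow Fintype.one_lt_card (fun y hy => ?_) he₁ he₂
    (Submodule.Quotient.mk x) ((Set.Finite.mem_toFinset _).2 ⟨x, hx, rfl⟩)
  obtain ⟨d, hd, rfl⟩ := (Set.Finite.mem_toFinset _).1 hy
  exact ⟨card_projImage_pos (show d ∈ subcode K L C V d from ⟨hd, rfl⟩),
    card_projImage_subcode_sup_span_singleton_le C V d v⟩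

theorem uniformFibers_sup {C : Set (ι → L)} (hC : AlmostAffine K L C)
    (W : Submodule K (ι → K)) : ∀ Z, UniformFibers C Z (Z ⊔ W) := by
  induction W, IsNoetherian.noetherian W using Submodule.fg_induction with
  | singleton v => exact fun Z => uniformFibers_sup_span_singleton hC Z v
  | sup W₁ W₂ _ _ h₁ h₂ =>
    intro Z
    rw [← sup_assoc]
    exact (h₁ Z).trans le_sup_left le_sup_left (h₂ (Z ⊔ W₁))

end UniformFibers

theorem stmt_12_general {K L : Type} [Field K] [Field L] [Fintype L] [Algebra K L]
    {n : ℕ} (C : Set (Fin n → L)) (hC : AlmostAffine K L C)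
    (Z : Submodule K (Fin n → K)) (x : Fin n → L) (hx : x ∈ C) :
    AlmostAffine K L (subcode K L C Z x) ∧
    ∀ W : Submodule K (Fin n → K),
      Nat.card (projImage K L (subcode K L C Z x) W) =
        Fintype.card L ^ (rho K L C (Z ⊔ W) - rho K L C Z) := by
  have hcard : ∀ W, Nat.card (projImage K L (subcode K L C Z x) W) =
      Fintype.card L ^ (rho K L C (Z ⊔ W) - rho K L C Z) := by
    intro W
    obtain ⟨a, ha⟩ := hC Z
    obtain ⟨b, hb⟩ := hC (Z ⊔ W)
    have h := uniformFibers_sup hC W Z x hx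
    rw [card_projImage_subcode_sup, ha, hb] at h
    rw [rho_eq_of_card_eq ha, rho_eq_of_card_eq hb]
    exact eq_pow_sub_of_mul_pow_eq_pow Fintype.one_lt_card h
  exact ⟨fun W => ⟨_, hcard W⟩, hcard⟩

/-- the subcode `C(Z,x)` is almost affine and
`|π_W(C(Z,x))| = q^{m(ρ_C(Z+W) − ρ_C(Z))}`. -/
theorem stmt_12 {K L : Type} [Field K] [Fintype K] [Field L] [Fintype L] [Algebra K L]
    {n : ℕ} (C : Set (Fin n → L)) (hC : AlmostAffine K L C)
    (Z : Submodule K (Fin n → K)) (x : Fin n → L) (hx : x ∈ C) :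
    AlmostAffine K L (subcode K L C Z x) ∧
    ∀ W : Submodule K (Fin n → K),
      Nat.card (projImage K L (subcode K L C Z x) W) =
        Fintype.card L ^ (rho K L C (Z ⊔ W) - rho K L C Z) :=
  stmt_12_general C hC Z x hx
end

section
/- Let C ⊆ F_{q^m}^n be almost affine, V, W ≤ F_q^n, x, y ∈ C. If z ∈ C(V,x) ∩ C(W,y), then C(V,x) ∩ C(W,y) = C(V+W, z). -/
open Submodule Module

variable (K L : Type) [Field K] [Fintype K] [Field L] [Fintype L] [Algebra K L]

section Aux

variable {K L : Type} [Field K] [Fintype K] [Field L] [Fintype L] [Algebra K L]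

lemma coord_mem_of_mem_extScalars {ι σ : Type} [Fintype σ] (B : Basis σ K L)
    (U : Submodule K (ι → K)) (w : ι → L) (hw : w ∈ extScalars K L U) (i : σ) :
    (fun j => B.repr (w j) i) ∈ U := by
  have key : ∀ (a b : L) (i : σ), B.repr (a * b) i = ∑ t, B.repr b t * B.repr (a * B t) i := by
    intro a b i
    conv_lhs => rw [← Basis.sum_repr B b, Finset.mul_sum]
    rw [map_sum, Finsupp.coe_finset_sum, Finset.sum_apply]
    apply Finset.sum_congr rfl
    intro t _
    rw [mul_smul_comm, map_smul, Finsupp.smul_apply, smul_eq_mul]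
  induction hw using Submodule.span_induction generalizing i with
  | mem w hw =>
    obtain ⟨u, hu, rfl⟩ := hw
    have : (fun j => B.repr ((fun (w : ι → K) (j : ι) => algebraMap K L (w j)) u j) i)
        = B.repr 1 i • u := by
      funext j
      simp only [Pi.smul_apply, smul_eq_mul]
      rw [Algebra.algebraMap_eq_smul_one, map_smul, Finsupp.smul_apply, smul_eq_mul, mul_comm]
    rw [this]
    exact U.smul_mem _ hu
  | zero =>
    have : (fun j => B.repr ((0 : ι → L) j) i) = (0 : ι → K) := by funext j; simp
    rw [this]; exact U.zero_mem
  | add a b _ _ ha hb =>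
    have : (fun j => B.repr ((a + b) j) i)
        = (fun j => B.repr (a j) i) + (fun j => B.repr (b j) i) := by
      funext j; simp
    rw [this]
    exact U.add_mem (ha i) (hb i)
  | smul a w _ hw =>
    have : (fun j => B.repr ((a • w) j) i)
        = ∑ t, B.repr (a * B t) i • (fun j => B.repr (w j) t) := by
      funext j
      rw [Finset.sum_apply]
      simp only [Pi.smul_apply, smul_eq_mul]
      rw [key a (w j) i]
      exact Finset.sum_congr rfl fun t _ => mul_comm _ _
    rw [this]
    exact Submodule.sum_mem _ fun t _ => U.smul_mem _ (hw t)

lemma mem_extScalars_of_coord {ι σ : Type} [Fintype σ] (B : Basis σ K L)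
    (U : Submodule K (ι → K)) (w : ι → L)
    (h : ∀ i, (fun j => B.repr (w j) i) ∈ U) : w ∈ extScalars K L U := by
  have hw : w = ∑ i, B i • (fun j => algebraMap K L (B.repr (w j) i)) := by
    funext j
    rw [Finset.sum_apply]
    conv_lhs => rw [← Basis.sum_repr B (w j)]
    apply Finset.sum_congr rfl
    intro i _
    simp only [Pi.smul_apply, smul_eq_mul]
    rw [Algebra.smul_def, mul_comm]
  rw [hw]
  exact Submodule.sum_mem _ fun i _ => Submodule.smul_mem _ _
    (Submodule.subset_span ⟨_, h i, rfl⟩)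

lemma extScalars_inf {ι : Type} (U U' : Submodule K (ι → K)) :
    extScalars K L (U ⊓ U') = extScalars K L U ⊓ extScalars K L U' := by
  have B := Module.finBasis K L
  apply le_antisymm
  · exact le_inf (Submodule.span_mono (Set.image_mono fun _ h => h.1))
      (Submodule.span_mono (Set.image_mono fun _ h => h.2))
  · rintro w ⟨h1, h2⟩
    exact mem_extScalars_of_coord B _ w fun i =>
      ⟨coord_mem_of_mem_extScalars B _ w h1 i, coord_mem_of_mem_extScalars B _ w h2 i⟩

lemma stdPerp_sup {ι : Type} [Fintype ι] (V W : Submodule K (ι → K)) :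
    stdPerp K (V ⊔ W) = stdPerp K V ⊓ stdPerp K W := by
  ext w
  constructor
  · intro h
    exact ⟨fun v hv => h v (Submodule.mem_sup_left hv),
      fun v hv => h v (Submodule.mem_sup_right hv)⟩
  · rintro ⟨h1, h2⟩ v hv
    obtain ⟨a, ha, b, hb, rfl⟩ := Submodule.mem_sup.mp hv
    have : ∑ j, (a + b) j * w j = (∑ j, a j * w j) + ∑ j, b j * w j := by
      rw [← Finset.sum_add_distrib]
      exact Finset.sum_congr rfl fun j _ => by simp [add_mul]
    rw [this, h1 a ha, h2 b hb, add_zero]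

end Aux

/-- if `z ∈ C(V,x) ∩ C(W,y)` then `C(V,x) ∩ C(W,y) = C(V+W, z)`. -/
theorem stmt_16 {K L : Type} [Field K] [Fintype K] [Field L] [Fintype L] [Algebra K L]
    {n : ℕ} (C : Set (Fin n → L)) (hC : AlmostAffine K L C)
    (V W : Submodule K (Fin n → K)) (x y : Fin n → L) (hx : x ∈ C) (hy : y ∈ C)
    (z : Fin n → L) (hz : z ∈ subcode K L C V x ∩ subcode K L C W y) :
    subcode K L C V x ∩ subcode K L C W y = subcode K L C (V ⊔ W) z := by
  obtain ⟨⟨hzC, hzx⟩, ⟨_, hzy⟩⟩ := hz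
  rw [Submodule.Quotient.eq] at hzx hzy
  have key : extScalars K L (stdPerp K (V ⊔ W))
      = extScalars K L (stdPerp K V) ⊓ extScalars K L (stdPerp K W) := by
    rw [stdPerp_sup, extScalars_inf]
  ext c
  simp only [subcode, Set.mem_inter_iff, Set.mem_setOf_eq, Submodule.Quotient.eq, key,
    Submodule.mem_inf]
  constructor
  · rintro ⟨⟨hc, h1⟩, _, h2⟩
    refine ⟨hc, ?_, ?_⟩
    · have := Submodule.sub_mem _ h1 hzx
      simpa using this
    · have := Submodule.sub_mem _ h2 hzy
      simpa using this
  · rintro ⟨hc, h1, h2⟩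
    refine ⟨⟨hc, ?_⟩, hc, ?_⟩
    · have := Submodule.add_mem _ h1 hzx
      simpa using this
    · have := Submodule.add_mem _ h2 hzy
      simpa using this
end
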